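/- For n ≥ 2, there exists an n×n complex matrix A that cannot be expressed as a finite product of symmetric Toeplitz matrices. -/

import Mathlib

/-!
A symmetric Toeplitz matrix `T` is centrosymmetric: `T (rev i) (rev k) = T k i = T i k`, because
the diagonal index `k - i` only changes sign when both indices are reversed. Centrosymmetric
matrices are the fixed points of conjugation by the exchange matrix, hence closed under products,
while the matrix unit `E₀₀` is not centrosymmetric once `n ≥ 2`.
-/

namespace Matrix

variable {R : Type*} {n : ℕ}

def IsToeplitz (M : Matrix (Fin n) (Fin n) R) : Prop :=
  ∀ i k i' k' : Fin n, (k : ℤ) - i = k' - i' → M i k = M i' k'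

variable (R n) in
def centrosymmetric [Semiring R] : Submonoid (Matrix (Fin n) (Fin n) R) where
  carrier := {M | M.submatrix Fin.revPerm Fin.revPerm = M}
  mul_mem' {M N} hM hN := by
    change (M * N).submatrix _ _ = M * N
    rw [← submatrix_mul_equiv M N _ Fin.revPerm, hM, hN]
  one_mem' := submatrix_one_equiv _

theorem mem_centrosymmetric_iff [Semiring R] {M : Matrix (Fin n) (Fin n) R} :
    M ∈ centrosymmetric R n ↔ ∀ i k, M i.rev k.rev = M i k := by
  simp only [centrosymmetric, Submonoid.mem_mk, Subsemigroup.mem_mk, Set.mem_ofPred_eq,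
    ← Matrix.ext_iff, submatrix_apply, Fin.revPerm_apply]

theorem IsToeplitz.mem_centrosymmetric_of_isSymm [Semiring R] {M : Matrix (Fin n) (Fin n) R}
    (hToep : M.IsToeplitz) (hSymm : M.IsSymm) : M ∈ centrosymmetric R n := by
  refine mem_centrosymmetric_iff.2 fun i k => ?_
  calc M i.rev k.rev = M k i := hToep _ _ _ _ (by simp only [Fin.val_rev]; omega)
    _ = M i k := hSymm.apply i k

theorem single_notMem_centrosymmetric [Semiring R] [Nontrivial R] {i : Fin n}
    (hi : i.rev ≠ i) : single i i (1 : R) ∉ centrosymmetric R n := fun h =>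
  hi (by simpa [single_apply] using mem_centrosymmetric_iff.1 h i i : i = i.rev).symm

end Matrix

/-- For `n ≥ 2`, some `n × n` matrix is not a finite product of
symmetric Toeplitz matrices. -/
theorem exists_not_product_symm_toeplitz (n : ℕ) (hn : 2 ≤ n) :
    ∃ A : Matrix (Fin n) (Fin n) ℂ,
      ∀ (r : ℕ) (T : Fin r → Matrix (Fin n) (Fin n) ℂ),
        (∀ m : Fin r,
          (∀ i k i' k' : Fin n,
            (k : ℤ) - (i : ℤ) = (k' : ℤ) - (i' : ℤ) → T m i k = T m i' k') ∧
          (T m).transpose = T m) →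
        A ≠ (List.ofFn T).prod := by
  let i₀ : Fin n := ⟨0, by omega⟩
  have hrev : i₀.rev ≠ i₀ := by simp only [ne_eq, Fin.ext_iff, Fin.val_rev, i₀]; omega
  refine ⟨Matrix.single i₀ i₀ 1, fun r T hT hA =>
    Matrix.single_notMem_centrosymmetric (R := ℂ) hrev ?_⟩
  rw [hA]
  refine Submonoid.list_prod_mem _ fun M hM => ?_
  obtain ⟨m, rfl⟩ := List.mem_ofFn.1 hM
  exact Matrix.IsToeplitz.mem_centrosymmetric_of_isSymm (hT m).1 (hT m).2
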